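/- arXiv:2303.10889 — 2 statements merged into one kernel-verified Lean document; each statement's English description precedes it below -/
import Mathlib

section
/- Let D be a multidimensional hybrid domain on ≺ with respect to thresholds x̲ and x̄, and let s ∈ M satisfy x̲^s = x̄^s. Then for every n ≥ 2, a marginal SCF f^s : ([D]^s)^n → A^s is a strategy-proof unanimous marginal rule if and only if it is a fixed ballot rule (FBR) on ≺^s. -/
noncomputable section

universe u

/-- A (strict) preference: a complete, antisymmetric, transitive binary relation,
i.e. a strict linear order, on `α`.  `rel a b` reads "`a` is strictly preferred to `b`". -/
structure Pref (α : Type u) : Type u where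
  rel : α → α → Prop
  asymm : ∀ a b, rel a b → ¬ rel b a
  trans : ∀ a b c, rel a b → rel b c → rel a c
  total : ∀ a b, a ≠ b → rel a b ∨ rel b a

namespace Pref

variable {α : Type u}

theorem exists_top [Finite α] [Nonempty α] (P : Pref α) :
    ∃ a : α, ∀ b, b ≠ a → P.rel a b := by
  haveI : IsTrans α P.rel := ⟨P.trans⟩
  haveI : IsIrrefl α P.rel := ⟨fun a h => P.asymm a a h h⟩
  obtain ⟨a, -, ha⟩ :=
    (Finite.wellFounded_of_trans_of_irrefl P.rel).has_min Set.univ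
      ⟨Classical.arbitrary α, trivial⟩
  refine ⟨a, fun b hb => ?_⟩
  rcases P.total a b (fun h => hb h.symm) with h | h
  · exact h
  · exact absurd h (ha b trivial)

/-- The top-ranked alternative `r₁(P)` of a preference. -/
def top [Finite α] [Nonempty α] (P : Pref α) : α := P.exists_top.choose

theorem top_spec [Finite α] [Nonempty α] (P : Pref α) :
    ∀ b, b ≠ P.top → P.rel P.top b := P.exists_top.choose_spec

/-- `rank P a = k` means that `a` is the `k`-th ranked alternative `r_k(P)`. -/
def rank (P : Pref α) (a : α) : ℕ := {b | P.rel b a}.ncard + 1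

/-- The induced marginal preference `[P]^s` on component `s`:
derived from `P` by referring to the off-`s` components of the top alternative. -/
def marg {m : ℕ} {A : Fin m → Type u} [∀ s, Fintype (A s)] [∀ s, Nonempty (A s)]
    (P : Pref (∀ s, A s)) (s : Fin m) : Pref (A s) where
  rel x y := P.rel (Function.update P.top s x) (Function.update P.top s y)
  asymm _ _ h := P.asymm _ _ h
  trans _ _ _ h₁ h₂ := P.trans _ _ _ h₁ h₂
  total x y hxy := P.total _ _ fun h => hxy (by
    have := congrFun h s
    simpa using this)

end Pref

section SocialChoice

variable {m : ℕ} {A : Fin m → Type u}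

/-- `a` and `b` are similar, differing exactly in component `s`: `M(a,b) = {s}`. -/
def SimilarAt (a b : ∀ s, A s) (s : Fin m) : Prop :=
  a s ≠ b s ∧ ∀ t, t ≠ s → a t = b t

/-- The "slice" `(A^s, x^{-s})` of alternatives agreeing with `x` off component `s`. -/
def Slice (s : Fin m) (x : ∀ t, A t) : Set (∀ t, A t) :=
  {a | ∀ t, t ≠ s → a t = x t}

variable [∀ s, Fintype (A s)] [∀ s, Nonempty (A s)]

/-- The induced marginal domain `[D]^s`. -/
def margDomain (D : Set (Pref (∀ s, A s))) (s : Fin m) : Set (Pref (A s)) :=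
  (fun P => Pref.marg P s) '' D

/-- A preference is minimal-richness witnessed: every alternative is some preference's top. -/
def MinimallyRich (D : Set (Pref (∀ s, A s))) : Prop :=
  ∀ a : ∀ s, A s, ∃ P ∈ D, Pref.top P = a

/-- A separable preference. -/
def Separable (P : Pref (∀ s, A s)) : Prop :=
  ∃ Q : ∀ s, Pref (A s), ∀ (s : Fin m) (a b : ∀ t, A t),
    SimilarAt a b s → (Q s).rel (a s) (b s) → P.rel a b

/-- A top-separable preference. -/
def TopSeparable (P : Pref (∀ s, A s)) : Prop :=
  ∀ (s : Fin m) (a b : ∀ t, A t), SimilarAt a b s → a s = Pref.top P s → P.rel a b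

end SocialChoice

/-- Two preferences are complete reversals. -/
def CompleteReversals {α : Type u} (P P' : Pref α) : Prop :=
  ∀ a b, P.rel a b ↔ P'.rel b a

section SCFProps

variable {β : Type u}

/-- Unanimity of a (marginal) social choice function on domain `E`. -/
def Unanimous [Finite β] [Nonempty β] (E : Set (Pref β)) {n : ℕ}
    (f : (Fin n → E) → β) : Prop :=
  ∀ (p : Fin n → E) (a : β), (∀ i, Pref.top (p i).1 = a) → f p = a

/-- Strategy-proofness of a (marginal) social choice function on domain `E`. -/
def StrategyProof (E : Set (Pref β)) {n : ℕ} (f : (Fin n → E) → β) : Prop :=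
  ∀ (p : Fin n → E) (i : Fin n) (Q : E),
    f p ≠ f (Function.update p i Q) →
    (p i).1.rel (f p) (f (Function.update p i Q))

/-- The tops-only property. -/
def TopsOnly [Finite β] [Nonempty β] (E : Set (Pref β)) {n : ℕ}
    (f : (Fin n → E) → β) : Prop :=
  ∀ p p' : Fin n → E, (∀ i, Pref.top (p i).1 = Pref.top (p' i).1) → f p = f p'

end SCFProps

section Decomp

variable {m : ℕ} {A : Fin m → Type u} [∀ s, Fintype (A s)] [∀ s, Nonempty (A s)]

/-- The profile of induced marginal preferences `([P₁]^s, …, [Pₙ]^s)`. -/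
def margProfile (D : Set (Pref (∀ s, A s))) (s : Fin m) {n : ℕ}
    (p : Fin n → D) : Fin n → (margDomain D s) :=
  fun i => ⟨Pref.marg (p i).1 s, ⟨(p i).1, (p i).2, rfl⟩⟩

/-- `f` is decomposed by the family of marginal SCFs `g`. -/
def Decomposable (D : Set (Pref (∀ s, A s))) {n : ℕ}
    (f : (Fin n → D) → (∀ s, A s))
    (g : ∀ s : Fin m, (Fin n → (margDomain D s)) → A s) : Prop :=
  ∀ p : Fin n → D, ∀ s, f p s = g s (margProfile D s p)

/-- A decomposable domain: for every `n ≥ 2` and every SCF, being a strategy-proof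
unanimous rule is equivalent to being decomposable into strategy-proof unanimous
marginal rules. -/
def DecomposableDomain (D : Set (Pref (∀ s, A s))) : Prop :=
  ∀ n : ℕ, 2 ≤ n → ∀ f : (Fin n → D) → (∀ s, A s),
    (Unanimous D f ∧ StrategyProof D f) ↔
      ∃ g : ∀ s : Fin m, (Fin n → (margDomain D s)) → A s,
        Decomposable D f g ∧
        ∀ s, Unanimous (margDomain D s) (g s) ∧ StrategyProof (margDomain D s) (g s)

/-- Diversity⁺: `D` contains two separable preferences that are complete reversals. -/
def DiversityPlus (D : Set (Pref (∀ s, A s))) : Prop :=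
  ∃ P ∈ D, ∃ P' ∈ D, Separable P ∧ Separable P' ∧ CompleteReversals P P'

end Decomp

/-- Adjacency of two preferences: they coincide except that two alternatives ranked
consecutively in `P` occupy the same two positions in reversed order in `P'`. -/
def Adjacent {β : Type u} (P P' : Pref β) : Prop :=
  ∃ a b : β, a ≠ b ∧
    P.rank b = P.rank a + 1 ∧ P'.rank b = P.rank a ∧ P'.rank a = P.rank a + 1 ∧
    ∀ c, c ≠ a → c ≠ b → P.rank c = P'.rank c

section AdjPlus

variable {m : ℕ} {A : Fin m → Type u} [∀ s, Fintype (A s)] [∀ s, Nonempty (A s)]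

/-- Adjacency⁺ of two (separable) preferences. -/
def AdjacentPlus (P P' : Pref (∀ s, A s)) : Prop :=
  Separable P ∧ Separable P' ∧
  ∃ (s : Fin m) (a b : A s), a ≠ b ∧
    (∀ z : ∀ t, A t,
      P.rank (Function.update z s b) = P.rank (Function.update z s a) + 1 ∧
      P'.rank (Function.update z s b) = P.rank (Function.update z s a) ∧
      P'.rank (Function.update z s a) = P.rank (Function.update z s a) + 1) ∧
    ∀ c : ∀ t, A t, c s ≠ a → c s ≠ b → P.rank c = P'.rank c

/-- Edges of the graph `G_{~/~⁺}`: adjacency or adjacency⁺. -/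
def AdjEdge (P P' : Pref (∀ s, A s)) : Prop :=
  Adjacent P P' ∨ AdjacentPlus P P'

end AdjPlus

/-- A path in a graph with edge relation `edge` and vertex set `S`, connecting `x` to `y`. -/
def IsPath {β : Type u} (edge : β → β → Prop) (S : Set β) (x y : β)
    (l : List β) : Prop :=
  2 ≤ l.length ∧ l.Nodup ∧ l.head? = some x ∧ l.getLast? = some y ∧
    (∀ z ∈ l, z ∈ S) ∧ List.Chain' edge l

/-- A path of preferences has `{a,b}`-restoration if the relative ranking of `a` and `b`
flips more than once along the path. -/
def HasRestoration {β : Type u} (l : List (Pref β)) (a b : β) : Prop :=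
  ∃ o p q : Fin l.length, o < p ∧ p < q ∧
    (((l.get o).rel a b ∧ (l.get p).rel b a ∧ (l.get q).rel a b) ∨
     ((l.get o).rel b a ∧ (l.get p).rel a b ∧ (l.get q).rel b a))

section RichDom

variable {m : ℕ} {A : Fin m → Type u} [∀ s, Fintype (A s)] [∀ s, Nonempty (A s)]

/-- The Interior⁺ property. -/
def InteriorPlus (D : Set (Pref (∀ s, A s))) : Prop :=
  ∀ P ∈ D, ∀ P' ∈ D, P ≠ P' → Pref.top P = Pref.top P' →
    ∃ l : List (Pref (∀ s, A s)),
      IsPath AdjEdge D P P' l ∧ ∀ Q ∈ l, Pref.top Q = Pref.top P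

/-- The Exterior⁺ property (including the no-detour condition). -/
def ExteriorPlus (D : Set (Pref (∀ s, A s))) : Prop :=
  ∀ P ∈ D, ∀ P' ∈ D, Pref.top P ≠ Pref.top P' →
    (∀ a b : ∀ s, A s, ∃ l : List (Pref (∀ s, A s)),
        IsPath AdjEdge D P P' l ∧ ¬ HasRestoration l a b) ∧
    ∀ s : Fin m, SimilarAt (Pref.top P) (Pref.top P') s →
      ∃ l : List (Pref (∀ s, A s)),
        IsPath AdjEdge D P P' l ∧ ∀ Q ∈ l, ∀ t, t ≠ s → Pref.top Q t = Pref.top P t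

/-- A rich domain: minimally rich, diversity⁺, Interior⁺ and Exterior⁺. -/
def RichDomain (D : Set (Pref (∀ s, A s))) : Prop :=
  MinimallyRich D ∧ DiversityPlus D ∧ InteriorPlus D ∧ ExteriorPlus D

end RichDom

/-- The weak interval `⟨x,y⟩` w.r.t. a linear order. -/
def wInterval {β : Type u} (lin : LinearOrder β) (x y : β) : Set β :=
  {z | (lin.le x z ∧ lin.le z y) ∨ (lin.le y z ∧ lin.le z x)}

/-- The strict (open) interval `Int⟨x,y⟩` w.r.t. a linear order. -/
def sInterval {β : Type u} (lin : LinearOrder β) (x y : β) : Set β :=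
  {z | (lin.lt x z ∧ lin.lt z y) ∨ (lin.lt y z ∧ lin.lt z x)}

/-- `x` and `y` are marginal thresholds w.r.t. `lin`. -/
def MarginalThresholds {β : Type u} (lin : LinearOrder β) (x y : β) : Prop :=
  x = y ∨ (x ≠ y ∧ 3 ≤ (wInterval lin x y).ncard)

/-- `x` and `y` are strongly connected in the marginal domain `E`: `x ≈ y`. -/
def StronglyConnected {β : Type u} (E : Set (Pref β)) (x y : β) : Prop :=
  ∃ Q ∈ E, ∃ Q' ∈ E,
    Pref.rank Q x = 1 ∧ Pref.rank Q y = 2 ∧ Pref.rank Q' y = 1 ∧ Pref.rank Q' x = 2 ∧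
    ∀ z, z ≠ x → z ≠ y → Pref.rank Q z = Pref.rank Q' z

/-- Edges of the graph `G_≈`. -/
def scEdge {β : Type u} (E : Set (Pref β)) (x y : β) : Prop :=
  x ≠ y ∧ StronglyConnected E x y

/-- The graph with edge relation `edge` on vertex set `B` is connected. -/
def GraphConnectedOn {β : Type u} (edge : β → β → Prop) (B : Set β) : Prop :=
  ∀ x ∈ B, ∀ y ∈ B, x ≠ y → ∃ l : List β, IsPath edge B x y l

/-- `v` is a leaf of the graph with edge relation `edge` on vertex set `B`:
it has a unique neighbor. -/
def IsLeaf {β : Type u} (edge : β → β → Prop) (B : Set β) (v : β) : Prop :=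
  v ∈ B ∧ ∃! w, w ∈ B ∧ edge v w

/-- A hybrid marginal preference on `lin` w.r.t. marginal thresholds `ylo`, `yhi`. -/
def HybridPref {β : Type u} [Finite β] [Nonempty β] (lin : LinearOrder β)
    (ylo yhi : β) (Q : Pref β) : Prop :=
  ∀ a b : β, a ≠ b → a ∈ sInterval lin (Pref.top Q) b →
    a ∉ sInterval lin ylo yhi → Q.rel a b

section MDH

variable {m : ℕ} {A : Fin m → Type u} [∀ s, Fintype (A s)] [∀ s, Nonempty (A s)]

/-- `xlo` and `xhi` are thresholds: marginal thresholds on every component. -/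
def Thresholds (prec : ∀ s, LinearOrder (A s)) (xlo xhi : ∀ s, A s) : Prop :=
  ∀ s, MarginalThresholds (prec s) (xlo s) (xhi s)

/-- A multidimensional hybrid preference on `≺ = ∏ prec s` w.r.t. thresholds `xlo`, `xhi`. -/
def MDHybrid (prec : ∀ s, LinearOrder (A s)) (xlo xhi : ∀ s, A s)
    (P : Pref (∀ s, A s)) : Prop :=
  ∀ (s : Fin m) (a b : ∀ t, A t), SimilarAt a b s →
    (a s = Pref.top P s → P.rel a b) ∧
    (a s ∈ sInterval (prec s) (Pref.top P s) (b s) →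
      a s ∉ sInterval (prec s) (xlo s) (xhi s) → P.rel a b)

/-- A multidimensional single-peaked preference on `≺ = ∏ prec s`. -/
def MSP (prec : ∀ s, LinearOrder (A s)) (P : Pref (∀ s, A s)) : Prop :=
  ∀ (s : Fin m) (a b : ∀ t, A t), SimilarAt a b s →
    a s ∈ wInterval (prec s) (Pref.top P s) (b s) → P.rel a b

/-- A multidimensional hybrid domain on `≺` w.r.t. thresholds `xlo`, `xhi`. -/
def MDHybridDomain (D : Set (Pref (∀ s, A s))) (prec : ∀ s, LinearOrder (A s))
    (xlo xhi : ∀ s, A s) : Prop :=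
  Thresholds prec xlo xhi ∧
  (∀ P ∈ D, MDHybrid prec xlo xhi P) ∧
  ∀ s, GraphConnectedOn (scEdge (margDomain D s)) Set.univ ∧
    (xlo s ≠ xhi s →
      ∀ v, ¬ IsLeaf (scEdge (margDomain D s)) (wInterval (prec s) (xlo s) (xhi s)) v)

/-- Strong connectedness⁺ of two alternatives: `a ≈⁺ b`. -/
def SCPlus (D : Set (Pref (∀ s, A s))) (a b : ∀ s, A s) : Prop :=
  ∃ P ∈ D, ∃ P' ∈ D, Pref.top P = a ∧ Pref.top P' = b ∧ AdjacentPlus P P'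

end MDH

/-- The outcome of the fixed-ballot formula
`max_{J ⊆ N} ( min_{i ∈ J} ( r₁(Qᵢ), b_J ) )`. -/
def fbrValue {β : Type u} (lin : LinearOrder β) {n : ℕ} [Fintype β]
    (bal : Finset (Fin n) → β) (tops : Fin n → β) : β :=
  letI := lin
  letI : DecidableEq β := lin.toDecidableEq
  Finset.univ.sup' ⟨∅, Finset.mem_univ _⟩
    fun J : Finset (Fin n) =>
      (insert (bal J) (J.image tops)).inf' (Finset.insert_nonempty _ _) id

/-- Fixed ballots: ballot unanimity and monotonicity. -/
def FBRBallots {β : Type u} [Fintype β] [Nonempty β] (lin : LinearOrder β) {n : ℕ}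
    (bal : Finset (Fin n) → β) : Prop :=
  bal ∅ = @Finset.min' β lin Finset.univ Finset.univ_nonempty ∧
  bal Finset.univ = @Finset.max' β lin Finset.univ Finset.univ_nonempty ∧
  ∀ J J' : Finset (Fin n), J ⊂ J' → lin.le (bal J) (bal J')

/-- A fixed ballot rule (FBR) on the linear order `lin`. -/
def IsFBR {β : Type u} [Fintype β] [Nonempty β] (lin : LinearOrder β)
    (E : Set (Pref β)) {n : ℕ} (f : (Fin n → E) → β) : Prop :=
  ∃ bal : Finset (Fin n) → β, FBRBallots lin bal ∧
    ∀ p : Fin n → E, f p = fbrValue lin bal fun i => Pref.top (p i).1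

/-- An `(xlo, xhi)`-FBR: an FBR that additionally satisfies the
constrained-dictatorship condition. -/
def IsConstrainedFBR {β : Type u} [Fintype β] [Nonempty β] (lin : LinearOrder β)
    (xlo xhi : β) (E : Set (Pref β)) {n : ℕ} (f : (Fin n → E) → β) : Prop :=
  ∃ bal : Finset (Fin n) → β, FBRBallots lin bal ∧
    (∀ p : Fin n → E, f p = fbrValue lin bal fun i => Pref.top (p i).1) ∧
    ∃ i : Fin n, ∀ J : Finset (Fin n),
      (i ∈ J → lin.le xhi (bal J)) ∧ (i ∉ J → lin.le (bal J) xlo)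


/-!
Because `xlo s = xhi s`, every induced marginal preference is single-peaked on `prec s`. On a
single-peaked domain every strongly connected pair is a covering pair of the order, and, as `G_≈`
is connected, every covering pair is strongly connected.

An FBR reacts to each voter's peak by clamping it to an interval fixed by the other voters, which
makes it unanimous and strategy-proof. Conversely, by induction on the number of voters, a
unanimous strategy-proof rule is tops-only: merging voters `0` and `1` gives an FBR by induction,
and a change of voter `0`'s report that keeps its peak `t` but moves the outcome would have to move
it across `t`, which the merged rule forbids. Along a covering pair `w ⋖ z`, a tops-only rule seen
as a function of one voter's peak is constant or the identity (strategy-proofness at the two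
preferences witnessing `w ≈ z`), which forces it to be a clamp; and a function that is a clamp in
each coordinate is the FBR whose ballots are its values at the profiles of extreme peaks.
-/

namespace Pref

variable {α : Type u}

theorem irrefl (P : Pref α) (a : α) : ¬ P.rel a a := fun h => P.asymm a a h h

theorem ne_of_rel (P : Pref α) {a b : α} (h : P.rel a b) : a ≠ b := by
  rintro rfl
  exact P.irrefl a h

theorem top_eq_of_forall_rel [Finite α] [Nonempty α] (P : Pref α) {a : α}
    (h : ∀ b, b ≠ a → P.rel a b) : P.top = a := by
  by_contra hne
  exact P.asymm _ _ (h P.top hne) (P.top_spec a fun e => hne e.symm)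

theorem rank_lt_of_rel [Finite α] (P : Pref α) {a b : α} (h : P.rel a b) :
    P.rank a < P.rank b := by
  have hss : {c | P.rel c a} ⊂ {c | P.rel c b} :=
    Set.ssubset_iff_of_subset (fun c hc => P.trans _ _ _ hc h) |>.mpr ⟨a, h, P.irrefl a⟩
  have := Set.ncard_lt_ncard hss (Set.toFinite _)
  simp only [rank]
  omega

theorem rank_injective [Finite α] (P : Pref α) : Function.Injective P.rank := by
  intro a b h
  by_contra hne
  rcases P.total a b hne with h' | h' <;> have := P.rank_lt_of_rel h' <;> omega

theorem one_le_rank (P : Pref α) (a : α) : 1 ≤ P.rank a := Nat.le_add_left 1 _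

theorem top_eq_of_rank_eq_one [Finite α] [Nonempty α] (P : Pref α) {a : α}
    (h : P.rank a = 1) : P.top = a := by
  have hempty : {b | P.rel b a} = ∅ :=
    (Set.ncard_eq_zero (Set.toFinite _)).mp (by simp only [rank] at h; omega)
  refine P.top_eq_of_forall_rel fun b hb => (P.total a b fun e => hb e.symm).resolve_right ?_
  exact fun hba => (hempty ▸ hba : b ∈ (∅ : Set α))

theorem marg_top {m : ℕ} {A : Fin m → Type u} [∀ s, Fintype (A s)] [∀ s, Nonempty (A s)]
    (P : Pref (∀ s, A s)) (s : Fin m) : (P.marg s).top = P.top s := by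
  refine (P.marg s).top_eq_of_forall_rel fun y hy => ?_
  show P.rel (Function.update P.top s (P.top s)) (Function.update P.top s y)
  rw [Function.update_eq_self]
  exact P.top_spec _ fun h => hy (by simpa using congrFun h s)

def SinglePeaked [LinearOrder α] [Finite α] [Nonempty α] (Q : Pref α) : Prop :=
  ∀ x y, x ≠ y → x ∈ Set.uIcc Q.top y → Q.rel x y

end Pref

section SinglePeaked

variable {β : Type u} [LinearOrder β] [Finite β] [Nonempty β] {Q Q' : Pref β} {a b t : β}

theorem HybridPref.singlePeaked {y : β} (h : HybridPref ‹LinearOrder β› y y Q) :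
    Q.SinglePeaked := by
  intro a b hab hmem
  by_cases ht : a = Q.top
  · exact ht ▸ Q.top_spec b (ht ▸ hab).symm
  refine h a b hab ?_ ?_
  · rw [Set.mem_uIcc] at hmem
    show (Q.top < a ∧ a < b) ∨ (b < a ∧ a < Q.top)
    rcases hmem with ⟨h1, h2⟩ | ⟨h1, h2⟩
    · exact Or.inl ⟨lt_of_le_of_ne h1 (Ne.symm ht), lt_of_le_of_ne h2 hab⟩
    · exact Or.inr ⟨lt_of_le_of_ne h1 (Ne.symm hab), lt_of_le_of_ne h2 ht⟩
  · rintro (⟨h1, h2⟩ | ⟨h1, h2⟩) <;> exact lt_asymm h1 h2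

theorem MDHybrid.hybridPref_marg {m : ℕ} {A : Fin m → Type u} [∀ s, Fintype (A s)]
    [∀ s, Nonempty (A s)] {prec : ∀ s, LinearOrder (A s)} {xlo xhi : ∀ s, A s}
    {P : Pref (∀ s, A s)} (h : MDHybrid prec xlo xhi P) (s : Fin m) :
    HybridPref (prec s) (xlo s) (xhi s) (P.marg s) := by
  intro a b hab hmem hout
  have hsim : SimilarAt (Function.update P.top s a) (Function.update P.top s b) s :=
    ⟨by simpa using hab, fun t ht => by simp [Function.update_of_ne ht]⟩
  rw [Pref.marg_top] at hmem
  exact (h s _ _ hsim).2 (by simpa using hmem) (by simpa using hout)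

namespace Pref.SinglePeaked

theorem lt_of_rel_of_isTop (hQ : Q.SinglePeaked) (htop : IsTop Q.top) (h : Q.rel a b) :
    b < a := by
  by_contra! hab
  have hne := Q.ne_of_rel h
  exact Q.asymm _ _ h (hQ b a hne.symm (Set.mem_uIcc.mpr (Or.inr ⟨hab, htop b⟩)))

theorem lt_of_rel_of_isBot (hQ : Q.SinglePeaked) (hbot : IsBot Q.top) (h : Q.rel a b) :
    a < b := by
  by_contra! hab
  have hne := Q.ne_of_rel h
  exact Q.asymm _ _ h (hQ b a hne.symm (Set.mem_uIcc.mpr (Or.inl ⟨hbot b, hab⟩)))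

theorem rel_or_rel_of_lt_of_lt (hQ : Q.SinglePeaked) (hat : a < t) (htb : t < b) :
    Q.rel t a ∨ Q.rel t b := by
  rcases le_total t Q.top with h | h
  · exact Or.inl (hQ t a hat.ne' (Set.mem_uIcc.mpr (Or.inr ⟨hat.le, h⟩)))
  · exact Or.inr (hQ t b htb.ne (Set.mem_uIcc.mpr (Or.inl ⟨h, htb.le⟩)))

theorem lt_top_lt_of_rel_of_rel (hQ : Q.SinglePeaked) (hQ' : Q'.SinglePeaked)
    (htop : Q.top = Q'.top) (h : Q.rel a b) (h' : Q'.rel b a) :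
    (a < Q.top ∧ Q.top < b) ∨ (b < Q.top ∧ Q.top < a) := by
  have hab := Q.ne_of_rel h
  have hb : b ∉ Set.uIcc Q.top a := fun hm => Q.asymm _ _ h (hQ b a hab.symm hm)
  have ha : a ∉ Set.uIcc Q.top b := fun hm => Q'.asymm _ _ h' (hQ' a b hab (htop ▸ hm))
  simp only [Set.mem_uIcc, not_or, not_and, not_le] at ha hb
  rcases le_total a b with hle | hle
  · exact Or.inl ⟨not_le.mp fun h => (ha.1 h).not_ge hle, hb.2 hle⟩
  · exact Or.inr ⟨not_le.mp fun h => (hb.1 h).not_ge hle, ha.2 hle⟩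

end Pref.SinglePeaked

end SinglePeaked

theorem IsPath.eq_cons_cons {β : Type u} {edge : β → β → Prop} {S : Set β} {x y : β}
    {l : List β} (h : IsPath edge S x y l) : ∃ b t, l = x :: b :: t := by
  obtain ⟨hlen, -, hhead, -⟩ := h
  rcases l with _ | ⟨a, _ | ⟨b, t⟩⟩
  · simp at hlen
  · simp at hlen
  · exact ⟨b, t, by simpa using hhead⟩

theorem List.IsChain.forall_lt_of_covBy {β : Type u} [LinearOrder β] {x a : β} {l : List β}
    (hl : (a :: l).IsChain fun u v => u ⋖ v ∨ v ⋖ u) (hx : x ∉ a :: l) (ha : a < x) :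
    ∀ c ∈ a :: l, c < x := by
  have hl' : (a :: l).IsChain fun u v => (u ⋖ v ∨ v ⋖ u) ∧ v ≠ x :=
    hl.imp_of_mem_imp fun u v _ hv huv => ⟨huv, fun e => hx (e ▸ hv)⟩
  refine hl'.induction (· < x) _ (fun u v ⟨huv, hvx⟩ hu => ?_) fun _ => ha
  rcases huv with huv | hvu
  · exact lt_of_le_of_ne (huv.ge_of_gt hu) hvx
  · exact hvu.lt.trans hu

section StronglyConnected

variable {β : Type u} [Finite β] [Nonempty β] {E : Set (Pref β)} {x y : β}

theorem StronglyConnected.exists_swap (h : StronglyConnected E x y) :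
    ∃ Q ∈ E, ∃ Q' ∈ E, Q.top = x ∧ Q'.top = y ∧
      ∀ a b, Q.rel a b → Q'.rel b a → a = x ∧ b = y := by
  obtain ⟨Q, hQ, Q', hQ', hx1, hy2, hy1', hx2', hoff⟩ := h
  refine ⟨Q, hQ, Q', hQ', Q.top_eq_of_rank_eq_one hx1, Q'.top_eq_of_rank_eq_one hy1',
    fun a b hab hba => ?_⟩
  have hlt := Q.rank_lt_of_rel hab
  have hlt' := Q'.rank_lt_of_rel hba
  have hlow : ∀ c, c ≠ x → c ≠ y → 3 ≤ Q.rank c ∧ Q.rank c = Q'.rank c := by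
    intro c hcx hcy
    have h1 : Q.rank c ≠ 1 := fun h => hcx (Q.rank_injective (h.trans hx1.symm))
    have h2 : Q.rank c ≠ 2 := fun h => hcy (Q.rank_injective (h.trans hy2.symm))
    have := Q.one_le_rank c
    exact ⟨by omega, hoff c hcx hcy⟩
  rcases eq_or_ne a x with rfl | hax
  · rcases eq_or_ne b y with rfl | hby
    · exact ⟨rfl, rfl⟩
    · have := hlow b (Q.ne_of_rel hab).symm hby
      omega
  exfalso
  rcases eq_or_ne a y with rfl | hay
  · have := Q'.one_le_rank b
    omega
  have := hlow a hax hay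
  rcases eq_or_ne b x with rfl | hbx
  · omega
  rcases eq_or_ne b y with rfl | hby
  · omega
  have := hlow b hbx hby
  omega

theorem exists_mem_top_eq_of_connected [Nontrivial β]
    (hconn : GraphConnectedOn (scEdge E) Set.univ) (z : β) : ∃ Q ∈ E, Q.top = z := by
  obtain ⟨y, hy⟩ := exists_ne z
  obtain ⟨l, hl⟩ := hconn z trivial y trivial hy.symm
  obtain ⟨b, t, rfl⟩ := hl.eq_cons_cons
  obtain ⟨-, Q, hQ, -, -, hz1, -⟩ := (List.isChain_cons_cons.mp hl.2.2.2.2.2).1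
  exact ⟨Q, hQ, Q.top_eq_of_rank_eq_one hz1⟩

variable [LinearOrder β]

theorem StronglyConnected.covBy_or_covBy (hE : ∀ Q ∈ E, Q.SinglePeaked) (hxy : x ≠ y)
    (h : StronglyConnected E x y) : x ⋖ y ∨ y ⋖ x := by
  obtain ⟨Q, hQ, -, -, hx1, hy2, -⟩ := h
  have htop := Q.top_eq_of_rank_eq_one hx1
  -- `rank Q y = 2` leaves room for only one alternative above `y`, namely the peak `x`
  have hbetween : ∀ c, c ≠ x → c ≠ y → c ∉ Set.uIcc x y := by
    intro c hcx hcy hc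
    have hone : {b | Q.rel b y}.ncard = 1 := by simp only [Pref.rank] at hy2; omega
    have hxy' : Q.rel x y := htop ▸ Q.top_spec y (htop ▸ hxy.symm)
    have hcy' : Q.rel c y := hE Q hQ c y hcy (htop ▸ hc)
    have := (Set.one_lt_ncard (s := {b | Q.rel b y}) (Set.toFinite _)).mpr
      ⟨x, hxy', c, hcy', hcx.symm⟩
    omega
  rcases hxy.lt_or_gt with hlt | hlt
  · exact Or.inl ⟨hlt, fun c h1 h2 =>
      hbetween c h1.ne' h2.ne (Set.mem_uIcc.mpr (Or.inl ⟨h1.le, h2.le⟩))⟩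
  · exact Or.inr ⟨hlt, fun c h1 h2 =>
      hbetween c h2.ne h1.ne' (Set.mem_uIcc.mpr (Or.inr ⟨h1.le, h2.le⟩))⟩

theorem StronglyConnected.of_covBy (hE : ∀ Q ∈ E, Q.SinglePeaked)
    (hconn : GraphConnectedOn (scEdge E) Set.univ) (h : x ⋖ y) : StronglyConnected E x y := by
  obtain ⟨l, hl⟩ := hconn x trivial y trivial h.ne
  obtain ⟨b, t, rfl⟩ := hl.eq_cons_cons
  obtain ⟨-, hnodup, -, hlast, -, hchain⟩ := hl
  obtain ⟨⟨hxb, hedge⟩, hchain⟩ := List.isChain_cons_cons.mp hchain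
  rcases hedge.covBy_or_covBy hE hxb with hxb' | hbx
  · rwa [h.unique_right hxb']
  have hcov : (b :: t).IsChain fun u v => u ⋖ v ∨ v ⋖ u :=
    hchain.imp fun u v huv => huv.2.covBy_or_covBy hE huv.1
  have hy : y ∈ b :: t := List.mem_of_getLast? (by simpa using hlast)
  exact absurd (hcov.forall_lt_of_covBy (List.nodup_cons.mp hnodup).1 hbx.lt y hy) h.lt.not_gt

end StronglyConnected

theorem rel_of_rel_update {ι α : Type*} [Finite ι] [DecidableEq ι]
    {r : (ι → α) → (ι → α) → Prop} (hrefl : ∀ p, r p p)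
    (htrans : ∀ p q w, r p q → r q w → r p w) {c : α → α → Prop}
    (hstep : ∀ p i a, c (p i) a → r p (Function.update p i a)) {p q : ι → α}
    (hpq : ∀ i, p i ≠ q i → c (p i) (q i)) : r p q := by
  have := Fintype.ofFinite ι
  suffices ∀ s : Finset ι, ∀ p : ι → α, (∀ i, p i ≠ q i → c (p i) (q i)) →
      (∀ i ∉ s, p i = q i) → r p q from this Finset.univ p hpq (by simp)
  intro s
  induction s using Finset.induction_on with
  | empty => exact fun p _ h => funext (fun i => h i (Finset.notMem_empty i)) ▸ hrefl p
  | insert i s hi ih =>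
    intro p hc hs
    have hupd : r (Function.update p i (q i)) q := by
      refine ih _ (fun j hj => ?_) (fun j hj => ?_) <;> rcases eq_or_ne j i with rfl | hji
      · simp at hj
      · simpa [hji] using hc j (by simpa [hji] using hj)
      · simp
      · simpa [hji] using hs j (by simp [hji, hj])
    by_cases hpi : p i = q i
    · rwa [← hpi, Function.update_eq_self] at hupd
    · exact htrans _ _ _ (hstep p i (q i) (hc i hpi)) hupd

section FixedBallot

variable {β : Type u} [Fintype β] [lo : LinearOrder β] {n : ℕ} {bal : Finset (Fin n) → β}
  {t t' : Fin n → β} {x : β}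

theorem fbrValue_eq_sup' : fbrValue lo bal t = Finset.univ.sup' Finset.univ_nonempty
    fun J => (insert (bal J) (J.image t)).inf' (Finset.insert_nonempty _ _) id := rfl

theorem le_fbrValue_iff (hbal : Monotone bal) :
    x ≤ fbrValue lo bal t ↔ x ≤ bal (Finset.univ.filter fun j => x ≤ t j) := by
  rw [fbrValue_eq_sup', Finset.le_sup'_iff]
  simp only [Finset.le_inf'_iff, Finset.forall_mem_insert, Finset.forall_mem_image, id,
    Finset.mem_univ, true_and]
  constructor
  · rintro ⟨J, hJ, hJt⟩
    exact hJ.trans (hbal fun j hj => by simpa using hJt hj)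
  · exact fun h => ⟨_, h, fun j hj => (Finset.mem_filter.mp hj).2⟩

theorem le_fbrValue_congr (hbal : Monotone bal) (h : ∀ j, x ≤ t j ↔ x ≤ t' j) :
    x ≤ fbrValue lo bal t ↔ x ≤ fbrValue lo bal t' := by
  rw [le_fbrValue_iff hbal, le_fbrValue_iff hbal, Finset.filter_congr fun j _ => h j]

theorem fbrValue_mono (hbal : Monotone bal) : Monotone (fbrValue lo bal) := by
  intro t t' htt'
  refine le_of_forall_le fun x hx => (le_fbrValue_iff hbal).mpr ?_
  refine ((le_fbrValue_iff hbal).mp hx).trans (hbal fun j hj => ?_)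
  simp only [Finset.mem_filter, Finset.mem_univ, true_and] at hj ⊢
  exact hj.trans (htt' j)

variable [BoundedOrder β]

theorem fbrValue_const (hbal : Monotone bal) (hbot : bal ∅ = ⊥) (htop : bal Finset.univ = ⊤)
    (a : β) : fbrValue lo bal (fun _ => a) = a := by
  refine eq_of_forall_le_iff fun x => ?_
  rw [le_fbrValue_iff hbal]
  by_cases hxa : x ≤ a
  · simp [hxa, htop]
  · simp only [hxa, Finset.filter_false, hbot, le_bot_iff, iff_false]
    exact fun hx => hxa (hx ▸ bot_le)

end FixedBallot

theorem max_min_mem_uIcc {β : Type*} [LinearOrder β] {A C : β} (t z : β) (h : A ≤ C) :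
    max A (min t C) ∈ Set.uIcc t (max A (min z C)) := by
  rcases le_total t A with htA | hAt
  · rw [max_eq_left ((min_le_left _ _).trans htA)]
    exact Set.mem_uIcc.mpr (Or.inl ⟨htA, le_max_left _ _⟩)
  rcases le_total t C with htC | hCt
  · rw [min_eq_left htC, max_eq_right hAt]
    exact Set.left_mem_uIcc
  · rw [min_eq_right hCt, max_eq_right h]
    exact Set.mem_uIcc.mpr (Or.inr ⟨max_le h (min_le_right _ _), hCt⟩)

section Clamp

variable {ι β : Type*} [DecidableEq ι] [lo : LinearOrder β] [BoundedOrder β]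

def ClampInEachCoord (F : (ι → β) → β) : Prop :=
  ∀ τ i z, F (Function.update τ i z) =
    max (F (Function.update τ i ⊥)) (min z (F (Function.update τ i ⊤)))

namespace ClampInEachCoord

variable {F : (ι → β) → β}

theorem apply_eq (hF : ClampInEachCoord F) (τ : ι → β) (i : ι) :
    F τ = max (F (Function.update τ i ⊥)) (min (τ i) (F (Function.update τ i ⊤))) := by
  simpa using hF τ i (τ i)

theorem monotone [Finite ι] (hF : ClampInEachCoord F) : Monotone F := by
  intro τ τ' h
  refine rel_of_rel_update (r := fun τ τ' => F τ ≤ F τ') (fun _ => le_rfl)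
    (fun _ _ _ => le_trans) (c := (· ≤ ·)) (fun τ i a ha => ?_) (fun i _ => h i)
  calc F τ = max (F (Function.update τ i ⊥)) (min (τ i) (F (Function.update τ i ⊤))) :=
        hF.apply_eq τ i
    _ ≤ max (F (Function.update τ i ⊥)) (min a (F (Function.update τ i ⊤))) := by gcongr
    _ = F (Function.update τ i a) := (hF τ i a).symm

theorem le_apply_iff_of_ne_bot [Finite ι] (hF : ClampInEachCoord F) {x : β} (hx : x ≠ ⊥)
    (τ : ι → β) :
    x ≤ F τ ↔ x ≤ F fun i => if x ≤ τ i then ⊤ else ⊥ := by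
  refine rel_of_rel_update (r := fun τ τ' => (x ≤ F τ ↔ x ≤ F τ')) (fun _ => Iff.rfl)
    (fun _ _ _ => Iff.trans) (c := fun z z' => (x ≤ z ↔ x ≤ z')) (fun τ i a ha => ?_)
    (fun i _ => ?_)
  · rw [hF.apply_eq τ i, hF τ i a, le_max_iff, le_max_iff, le_min_iff, le_min_iff, ha]
  · split_ifs with h <;> simp [h, hx]

theorem monotone_ballot [Finite ι] (hF : ClampInEachCoord F) :
    Monotone fun J : Finset ι => F fun i => if i ∈ J then ⊤ else ⊥ :=
  fun J J' h => hF.monotone fun i => by by_cases hi : i ∈ J <;> simp [hi, @h i]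

theorem eq_fbrValue [Fintype β] {n : ℕ} {F : (Fin n → β) → β} (hF : ClampInEachCoord F) :
    F = fbrValue lo fun J => F fun i => if i ∈ J then ⊤ else ⊥ := by
  funext τ
  refine eq_of_forall_le_iff fun x => ?_
  rw [le_fbrValue_iff hF.monotone_ballot]
  rcases eq_or_ne x ⊥ with rfl | hx
  · simp
  · rw [hF.le_apply_iff_of_ne_bot hx]
    simp

end ClampInEachCoord

theorem clampInEachCoord_fbrValue [Fintype β] {n : ℕ} {bal : Finset (Fin n) → β}
    (hbal : Monotone bal) : ClampInEachCoord (fbrValue lo bal) := by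
  intro t i z
  refine eq_of_forall_le_iff fun x => ?_
  rw [le_max_iff, le_min_iff]
  by_cases hxz : x ≤ z
  · have hAC :
        fbrValue lo bal (Function.update t i ⊥) ≤ fbrValue lo bal (Function.update t i ⊤) :=
      fbrValue_mono hbal (update_le_update_iff'.mpr bot_le)
    have := le_fbrValue_congr hbal (x := x) (t := Function.update t i z)
      (t' := Function.update t i ⊤) fun j => by rcases eq_or_ne j i with rfl | hj <;> simp [*]
    rw [this]
    exact ⟨fun h => Or.inr ⟨hxz, h⟩, fun h => h.elim (fun h => h.trans hAC) And.right⟩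
  · have hx : ¬ x ≤ ⊥ := fun h => hxz (h.trans bot_le)
    have := le_fbrValue_congr hbal (x := x) (t := Function.update t i z)
      (t' := Function.update t i ⊥) fun j => by rcases eq_or_ne j i with rfl | hj <;> simp [*]
    rw [this]
    simp [hxz]

end Clamp

section StrategyProof

variable {β : Type u} {E : Set (Pref β)} {n : ℕ} {f : (Fin n → E) → β}

namespace StrategyProof

/-- Voters sharing a preference cannot gain by misreporting jointly: chain their single
deviations, each of which leaves the deviator weakly worse off. -/
theorem comp (hf : StrategyProof E f) {M : ℕ} (π : Fin n → Fin M) :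
    StrategyProof E fun r : Fin M → E => f (r ∘ π) := by
  intro r k Q hne
  let WeaklyPrefers : (Fin n → E) → (Fin n → E) → Prop :=
    fun p q => f p = f q ∨ (r k).1.rel (f p) (f q)
  have htrans : ∀ p q w, WeaklyPrefers p q → WeaklyPrefers q w → WeaklyPrefers p w := by
    rintro p q w (hpq | hpq) (hqw | hqw)
    · exact Or.inl (hpq.trans hqw)
    · exact Or.inr (hpq ▸ hqw)
    · exact Or.inr (hqw ▸ hpq)
    · exact Or.inr ((r k).1.trans _ _ _ hpq hqw)
  have hstep : ∀ p i S, p i = r k → WeaklyPrefers p (Function.update p i S) := by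
    intro p i S hS
    by_cases h : f p = f (Function.update p i S)
    · exact Or.inl h
    · exact Or.inr (hS ▸ hf p i S h)
  have hchanged :
      ∀ i, (r ∘ π) i ≠ (Function.update r k Q ∘ π) i → (r ∘ π) i = r k := by
    intro i hi
    rcases eq_or_ne (π i) k with h | h
    · simp [h]
    · simp [Function.update_of_ne h] at hi
  exact (rel_of_rel_update (c := fun S _ => S = r k) (fun _ => Or.inl rfl) htrans hstep
    hchanged).resolve_left hne

theorem eq_and_eq_of_swap (hf : StrategyProof E f) {x y : β} {S S' : E}
    (hswap : ∀ a b, S.1.rel a b → S'.1.rel b a → a = x ∧ b = y) (p : Fin n → E)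
    (i : Fin n)
    (hne : f (Function.update p i S) ≠ f (Function.update p i S')) :
    f (Function.update p i S) = x ∧ f (Function.update p i S') = y := by
  have h := hf (Function.update p i S) i S'
  have h' := hf (Function.update p i S') i S
  simp only [Function.update_idem, Function.update_self] at h h'
  exact hswap _ _ (h hne) (h' hne.symm)

end StrategyProof

variable [Finite β] [Nonempty β]

theorem top_comp_update (p : Fin n → E) (i : Fin n) (Q : E) :
    (fun j => (Function.update p i Q j).1.top) =
      Function.update (fun j => (p j).1.top) i Q.1.top :=
  funext fun j => Function.apply_update (fun _ (Q : E) => Q.1.top) p i Q j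

theorem Unanimous.comp (hf : Unanimous E f) {M : ℕ} (π : Fin n → Fin M) :
    Unanimous E fun r : Fin M → E => f (r ∘ π) :=
  fun _ a h => hf _ a fun i => h (π i)

variable [LinearOrder β]

namespace StrategyProof

theorem apply_update_le_of_isBot (hE : ∀ Q ∈ E, Q.SinglePeaked) (hf : StrategyProof E f)
    (p : Fin n → E) (i : Fin n) {R : E} (hR : IsBot R.1.top) :
    f (Function.update p i R) ≤ f p := by
  by_contra! h
  have hrel := hf (Function.update p i R) i (p i)
  simp only [Function.update_idem, Function.update_eq_self, Function.update_self] at hrel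
  exact (hE _ R.2).lt_of_rel_of_isBot hR (hrel h.ne') |>.not_gt h

theorem le_apply_update_of_isTop (hE : ∀ Q ∈ E, Q.SinglePeaked) (hf : StrategyProof E f)
    (p : Fin n → E) (i : Fin n) {R : E} (hR : IsTop R.1.top) :
    f p ≤ f (Function.update p i R) := by
  by_contra! h
  have hrel := hf (Function.update p i R) i (p i)
  simp only [Function.update_idem, Function.update_eq_self, Function.update_self] at hrel
  exact (hE _ R.2).lt_of_rel_of_isTop hR (hrel h.ne) |>.not_gt h

theorem lt_top_lt_of_top_eq (hE : ∀ Q ∈ E, Q.SinglePeaked) (hf : StrategyProof E f)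
    (p : Fin n → E) (i : Fin n) {S : E} (htop : (p i).1.top = S.1.top)
    (hne : f p ≠ f (Function.update p i S)) :
    (f p < (p i).1.top ∧ (p i).1.top < f (Function.update p i S)) ∨
      (f (Function.update p i S) < (p i).1.top ∧ (p i).1.top < f p) := by
  have h' := hf (Function.update p i S) i (p i)
  simp only [Function.update_idem, Function.update_eq_self, Function.update_self] at h'
  exact (hE _ (p i).2).lt_top_lt_of_rel_of_rel (hE _ S.2) htop (hf p i S hne) (h' hne.symm)

end StrategyProof

end StrategyProof

section FixedBallotRule

variable {β : Type u} [Fintype β] [Nonempty β] [lo : LinearOrder β] {E : Set (Pref β)}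
  {n : ℕ} {f : (Fin n → E) → β}

theorem fbrBallots_iff [BoundedOrder β] {bal : Finset (Fin n) → β} :
    FBRBallots lo bal ↔ bal ∅ = ⊥ ∧ bal Finset.univ = ⊤ ∧ Monotone bal := by
  have hmin : Finset.univ.min' Finset.univ_nonempty = (⊥ : β) :=
    le_antisymm (Finset.min'_le _ _ (Finset.mem_univ _)) bot_le
  have hmax : Finset.univ.max' Finset.univ_nonempty = (⊤ : β) :=
    le_antisymm le_top (Finset.le_max' _ _ (Finset.mem_univ _))
  refine and_congr (by rw [hmin]) (and_congr (by rw [hmax])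
    ⟨fun h J J' hJ => ?_, fun h J J' hJ => h hJ.subset⟩)
  rcases eq_or_ssubset_of_subset hJ with rfl | hJ
  · exact le_rfl
  · exact h J J' hJ

namespace IsFBR

theorem apply_update [BoundedOrder β] (hf : IsFBR lo E f) (r : Fin n → E) (i : Fin n) (S : E)
    {Rb Rt : E} (hb : Rb.1.top = ⊥) (ht : Rt.1.top = ⊤) :
    f (Function.update r i S) =
      max (f (Function.update r i Rb)) (min S.1.top (f (Function.update r i Rt))) := by
  obtain ⟨bal, hbal, hform⟩ := hf
  simp only [hform, top_comp_update, hb, ht]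
  exact clampInEachCoord_fbrValue (fbrBallots_iff.mp hbal).2.2 _ i _

theorem unanimous (hf : IsFBR lo E f) : Unanimous E f := by
  let _ := Fintype.toBoundedOrder β
  obtain ⟨bal, hbal, hform⟩ := hf
  obtain ⟨hbot, htop, hmono⟩ := fbrBallots_iff.mp hbal
  intro p a hp
  rw [hform, funext hp, fbrValue_const hmono hbot htop]

theorem strategyProof (hE : ∀ Q ∈ E, Q.SinglePeaked) (hf : IsFBR lo E f) :
    StrategyProof E f := by
  let _ := Fintype.toBoundedOrder β
  obtain ⟨bal, hbal, hform⟩ := hf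
  have hmono := (fbrBallots_iff.mp hbal).2.2
  intro p i Q hne
  set τ := fun j => (p j).1.top
  have hAC :
      fbrValue lo bal (Function.update τ i ⊥) ≤ fbrValue lo bal (Function.update τ i ⊤) :=
    fbrValue_mono hmono (update_le_update_iff'.mpr bot_le)
  rw [hform, hform, top_comp_update, clampInEachCoord_fbrValue hmono,
    (clampInEachCoord_fbrValue hmono).apply_eq τ i] at hne ⊢
  exact hE _ (p i).2 _ _ hne (max_min_mem_uIcc _ _ hAC)

end IsFBR

end FixedBallotRule

section TopsOnly

variable {β : Type u} [Fintype β] [Nonempty β] [lo : LinearOrder β] {E : Set (Pref β)}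
  {m : ℕ} {f : (Fin (m + 2) → E) → β}

theorem update_tail_comp_cons {γ : Type*} (p : Fin (m + 2) → γ) (S : γ) :
    Function.update (Fin.tail p) 0 S ∘ (Fin.cons 0 id : Fin (m + 2) → Fin (m + 1)) =
      Function.update (Function.update p 0 S) 1 S := by
  funext j
  rcases Fin.eq_zero_or_eq_succ j with rfl | ⟨k, rfl⟩
  · simp
  rcases Fin.eq_zero_or_eq_succ k with rfl | ⟨l, rfl⟩
  · simp
  · have h1 : l.succ.succ ≠ (1 : Fin (m + 2)) := by
      rw [← Fin.succ_zero_eq_one]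
      exact (Fin.succ_injective _).ne (Fin.succ_ne_zero l)
    simp [Fin.tail, h1, Fin.succ_ne_zero]

/-- With `t` the common peak of voter `0` in `p` and `q`: strategy-proofness against the
extreme preferences puts `f p` and `f q` inside the interval to which the clone rule (voter `0`
reporting also for voter `1`) clamps `t`, so the clone returns `t` on both profiles, and voter
`1` would gain by copying voter `0` in one of them. -/
theorem not_lt_top_lt_of_clone_isFBR [BoundedOrder β] (hE : ∀ Q ∈ E, Q.SinglePeaked)
    {Rb Rt : E} (hb : Rb.1.top = ⊥) (ht : Rt.1.top = ⊤) (hsp : StrategyProof E f)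
    (hclone : IsFBR lo E fun r => f (r ∘ Fin.cons 0 id)) {p q : Fin (m + 2) → E}
    (hpq : ∀ j, j ≠ 0 → p j = q j) (htop : (p 0).1.top = (q 0).1.top) :
    ¬ (f p < (p 0).1.top ∧ (p 0).1.top < f q) := by
  rintro ⟨hpt, htq⟩
  have hq : Function.update p 0 (q 0) = q :=
    (Function.eq_update_iff.mpr ⟨rfl, fun j hj => (hpq j hj).symm⟩).symm
  set t := (p 0).1.top
  set w : E → β := fun S => f (Function.update (Function.update p 0 S) 1 S) with hw
  have hclamp : ∀ S, w S = max (w Rb) (min S.1.top (w Rt)) := fun S => by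
    simpa only [hw, Function.comp_def, ← update_tail_comp_cons] using
      hclone.apply_update (Fin.tail p) 0 S hb ht
  have hA : w Rb ≤ f p := (hsp.apply_update_le_of_isBot hE _ 1 (hb ▸ isBot_bot)).trans
    (hsp.apply_update_le_of_isBot hE p 0 (hb ▸ isBot_bot))
  have hC : f q ≤ w Rt := by
    have h := (hsp.le_apply_update_of_isTop hE q 0 (ht ▸ isTop_top)).trans
      (hsp.le_apply_update_of_isTop hE _ 1 (ht ▸ isTop_top))
    rwa [← hq, Function.update_idem, hq] at h
  have hwt : ∀ S : E, S.1.top = t → w S = t := fun S hS => by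
    rw [hclamp, hS, min_eq_left (htq.trans_le hC).le, max_eq_right (hA.trans hpt.le)]
  have hwp : f (Function.update p 1 (p 0)) = t := by
    simpa [hw] using hwt (p 0) rfl
  have hwq : f (Function.update q 1 (q 0)) = t := by
    simpa [hw, hq] using hwt (q 0) htop.symm
  have hp1 : (p 1).1.rel (f p) t := hwp ▸ hsp p 1 (p 0) (hwp ▸ hpt.ne)
  have hq1 : (p 1).1.rel (f q) t := hpq 1 one_ne_zero ▸ hwq ▸ hsp q 1 (q 0) (hwq ▸ htq.ne')
  rcases (hE _ (p 1).2).rel_or_rel_of_lt_of_lt hpt htq with h | h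
  · exact (p 1).1.asymm _ _ hp1 h
  · exact (p 1).1.asymm _ _ hq1 h

theorem apply_eq_of_top_eq_zero [BoundedOrder β] (hE : ∀ Q ∈ E, Q.SinglePeaked) {Rb Rt : E}
    (hb : Rb.1.top = ⊥) (ht : Rt.1.top = ⊤) (hsp : StrategyProof E f)
    (hclone : IsFBR lo E fun r => f (r ∘ Fin.cons 0 id)) {p q : Fin (m + 2) → E}
    (hpq : ∀ j, j ≠ 0 → p j = q j) (htop : (p 0).1.top = (q 0).1.top) : f p = f q := by
  have hq : Function.update p 0 (q 0) = q :=
    (Function.eq_update_iff.mpr ⟨rfl, fun j hj => (hpq j hj).symm⟩).symm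
  by_contra hne
  have h := hsp.lt_top_lt_of_top_eq hE p 0 htop (hq ▸ hne)
  rw [hq] at h
  rcases h with h | h
  · exact not_lt_top_lt_of_clone_isFBR hE hb ht hsp hclone hpq htop h
  · exact not_lt_top_lt_of_clone_isFBR hE hb ht hsp hclone (fun j hj => (hpq j hj).symm)
      htop.symm (htop ▸ h)

theorem apply_eq_apply_update_of_top_eq (hE : ∀ Q ∈ E, Q.SinglePeaked)
    (hrich : ∀ z, ∃ Q ∈ E, Q.top = z) (hu : Unanimous E f) (hsp : StrategyProof E f)
    (ih : ∀ g : (Fin (m + 1) → E) → β,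
      Unanimous E g → StrategyProof E g → IsFBR lo E g)
    (p : Fin (m + 2) → E) (i : Fin (m + 2)) (S : E) (htop : (p i).1.top = S.1.top) :
    f p = f (Function.update p i S) := by
  let _ := Fintype.toBoundedOrder β
  obtain ⟨Rb, hRb, hb⟩ := hrich ⊥
  obtain ⟨Rt, hRt, ht⟩ := hrich ⊤
  let σ := Equiv.swap 0 i
  have hσ : ∀ r : Fin (m + 2) → E, r ∘ σ ∘ σ = r := fun r => by
    funext j
    simp [σ, Equiv.swap_apply_self]
  have key := apply_eq_of_top_eq_zero (f := fun r => f (r ∘ σ)) hE (Rb := ⟨Rb, hRb⟩)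
    (Rt := ⟨Rt, hRt⟩) hb ht (hsp.comp σ) (ih _ ((hu.comp σ).comp _) ((hsp.comp σ).comp _))
    (p := p ∘ σ) (q := Function.update p i S ∘ σ) (fun j hj => ?_) ?_
  · simpa only [Function.comp_assoc, hσ] using key
  · have hji : σ j ≠ i := fun h => hj (by simpa [σ] using congrArg σ h)
    exact (Function.update_of_ne hji S p).symm
  · simpa [Function.update_comp_equiv, σ] using htop

theorem topsOnly_of_forall_isFBR (hE : ∀ Q ∈ E, Q.SinglePeaked)
    (hrich : ∀ z, ∃ Q ∈ E, Q.top = z) (hu : Unanimous E f) (hsp : StrategyProof E f)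
    (ih : ∀ g : (Fin (m + 1) → E) → β,
      Unanimous E g → StrategyProof E g → IsFBR lo E g) :
    TopsOnly E f := fun _ _ h =>
  rel_of_rel_update (r := fun p q => f p = f q) (fun _ => rfl) (fun _ _ _ => Eq.trans)
    (c := fun S T => S.1.top = T.1.top)
    (fun p i S hS => apply_eq_apply_update_of_top_eq hE hrich hu hsp ih p i S hS) fun i _ => h i

end TopsOnly

section Scan

variable {β : Type*} [LinearOrder β] [Finite β] {m : β → β}

theorem apply_eq_of_covBy_of_lt (hcov : ∀ w z, w ⋖ z → m w = m z ∨ (m w = w ∧ m z = z))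
    {z : β} (hz : m z < z) {u : β} (hzu : z ≤ u) : m u = m z := by
  induction u using WellFoundedLT.induction with
  | _ u ih =>
    rcases hzu.eq_or_lt with rfl | hlt
    · rfl
    obtain ⟨c, hzc, hcu⟩ := exists_le_covBy_of_lt hlt
    have hc := ih c hcu.lt hzc
    rcases hcov c u hcu with h | ⟨h, -⟩
    · rw [← h, hc]
    · exact absurd (h ▸ hc ▸ hz) (not_lt.mpr hzc)

theorem apply_eq_of_covBy_of_gt (hcov : ∀ w z, w ⋖ z → m w = m z ∨ (m w = w ∧ m z = z))
    {z : β} (hz : z < m z) {u : β} (huz : u ≤ z) : m u = m z :=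
  apply_eq_of_covBy_of_lt (β := βᵒᵈ) (m := OrderDual.toDual ∘ m ∘ OrderDual.ofDual)
    (fun _ _ h => (hcov _ _ (ofDual_covBy_ofDual_iff.mpr h)).imp Eq.symm And.symm)
    (z := OrderDual.toDual z) hz (u := OrderDual.toDual u) huz

theorem eq_max_min_of_covBy [BoundedOrder β]
    (hcov : ∀ w z, w ⋖ z → m w = m z ∨ (m w = w ∧ m z = z))
    (hbot : ∀ z, m ⊥ ≤ m z) (htop : ∀ z, m z ≤ m ⊤) (z : β) :
    m z = max (m ⊥) (min z (m ⊤)) := by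
  rcases lt_trichotomy (m z) z with h | h | h
  · rw [apply_eq_of_covBy_of_lt hcov h le_top, min_eq_right h.le, max_eq_right (hbot z)]
  · rw [min_eq_left (h ▸ htop z), max_eq_right (h ▸ hbot z), h]
  · rw [apply_eq_of_covBy_of_gt hcov h bot_le, max_eq_left ((min_le_left _ _).trans h.le)]

end Scan

section Characterization

variable {β : Type u} [Fintype β] [lo : LinearOrder β] {E : Set (Pref β)} {n : ℕ}
  {f : (Fin n → E) → β}

theorem clampInEachCoord_of_topsOnly [Nonempty β] [BoundedOrder β]
    (hE : ∀ Q ∈ E, Q.SinglePeaked) (hconn : GraphConnectedOn (scEdge E) Set.univ)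
    {pick : β → E} (hpick : ∀ z, (pick z).1.top = z) (htops : TopsOnly E f)
    (hsp : StrategyProof E f) : ClampInEachCoord fun τ : Fin n → β => f (pick ∘ τ) := by
  intro τ i
  have hm : ∀ (Q : E) z, Q.1.top = z →
      f (pick ∘ Function.update τ i z) = f (Function.update (pick ∘ τ) i Q) := by
    intro Q z hQ
    rw [Function.comp_update]
    refine htops _ _ fun j => ?_
    rcases eq_or_ne j i with rfl | hj <;> simp [*]
  refine eq_max_min_of_covBy (m := fun z => f (pick ∘ Function.update τ i z))
    (fun w z hwz => ?_) (fun z => ?_) (fun z => ?_)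
  · obtain ⟨Q, hQ, Q', hQ', hQw, hQ'z, hswap⟩ :=
      (StronglyConnected.of_covBy hE hconn hwz).exists_swap
    simp only [hm ⟨Q, hQ⟩ w hQw, hm ⟨Q', hQ'⟩ z hQ'z]
    exact or_iff_not_imp_left.mpr
      (hsp.eq_and_eq_of_swap (S := ⟨Q, hQ⟩) (S' := ⟨Q', hQ'⟩) hswap _ i)
  · simpa [hm (pick ⊥) ⊥ (hpick ⊥), hm (pick z) z (hpick z)] using
      hsp.apply_update_le_of_isBot hE (Function.update (pick ∘ τ) i (pick z)) i
        ((hpick ⊥).symm ▸ isBot_bot)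
  · simpa [hm (pick ⊤) ⊤ (hpick ⊤), hm (pick z) z (hpick z)] using
      hsp.le_apply_update_of_isTop hE (Function.update (pick ∘ τ) i (pick z)) i
        ((hpick ⊤).symm ▸ isTop_top)

theorem isFBR_of_topsOnly [Nonempty β] (hE : ∀ Q ∈ E, Q.SinglePeaked)
    (hconn : GraphConnectedOn (scEdge E) Set.univ) (hrich : ∀ z, ∃ Q ∈ E, Q.top = z)
    (htops : TopsOnly E f) (hu : Unanimous E f) (hsp : StrategyProof E f) : IsFBR lo E f := by
  let _ := Fintype.toBoundedOrder β
  have hpeak : ∀ z, ∃ Q : E, Q.1.top = z := fun z =>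
    let ⟨Q, hQ, hz⟩ := hrich z
    ⟨⟨Q, hQ⟩, hz⟩
  choose pick hpick using hpeak
  have hF := clampInEachCoord_of_topsOnly hE hconn hpick htops hsp
  have hconst : ∀ a, f (pick ∘ fun _ => a) = a := fun a => hu _ a fun _ => hpick a
  refine ⟨_, fbrBallots_iff.mpr ⟨by simpa using hconst ⊥, by simpa using hconst ⊤,
    hF.monotone_ballot⟩, fun p => ?_⟩
  rw [htops p (pick ∘ fun i => (p i).1.top) fun i => (hpick _).symm]
  exact congrFun hF.eq_fbrValue _

theorem isFBR_of_unanimous_of_strategyProof [Nontrivial β] (hE : ∀ Q ∈ E, Q.SinglePeaked)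
    (hconn : GraphConnectedOn (scEdge E) Set.univ) (hn : 1 ≤ n) (hu : Unanimous E f)
    (hsp : StrategyProof E f) : IsFBR lo E f := by
  have hrich := exists_mem_top_eq_of_connected hconn
  induction n, hn using Nat.le_induction with
  | base =>
    refine isFBR_of_topsOnly hE hconn hrich (fun p q h => ?_) hu hsp
    rw [hu p (p 0).1.top fun i => by rw [Subsingleton.elim i 0],
      hu q (q 0).1.top fun i => by rw [Subsingleton.elim i 0], h 0]
  | succ n hn ih =>
    obtain ⟨m, rfl⟩ : ∃ m, n = m + 1 := ⟨n - 1, by omega⟩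
    exact isFBR_of_topsOnly hE hconn hrich
      (topsOnly_of_forall_isFBR hE hrich hu hsp fun _ => ih) hu hsp

theorem unanimous_and_strategyProof_iff_isFBR [Nontrivial β] (hE : ∀ Q ∈ E, Q.SinglePeaked)
    (hconn : GraphConnectedOn (scEdge E) Set.univ) (hn : 1 ≤ n) :
    Unanimous E f ∧ StrategyProof E f ↔ IsFBR lo E f :=
  ⟨fun ⟨hu, hsp⟩ => isFBR_of_unanimous_of_strategyProof hE hconn hn hu hsp,
    fun h => ⟨h.unanimous, h.strategyProof hE⟩⟩

end Characterization

theorem stmt_2_general {m : ℕ} {A : Fin m → Type u}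
    [∀ s, Fintype (A s)] [∀ s, Nonempty (A s)]
    (hcard : ∀ s, 2 ≤ Fintype.card (A s))
    (D : Set (Pref (∀ s, A s)))
    (prec : ∀ s, LinearOrder (A s)) (xlo xhi : ∀ s, A s)
    (hMDH : MDHybridDomain D prec xlo xhi)
    (s : Fin m) (hs : xlo s = xhi s)
    (n : ℕ) (hn : 2 ≤ n)
    (f : (Fin n → (margDomain D s)) → A s) :
    (Unanimous (margDomain D s) f ∧ StrategyProof (margDomain D s) f) ↔
      IsFBR (prec s) (margDomain D s) f := by
  obtain ⟨-, hhyb, hgraph⟩ := hMDH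
  let _ := prec s
  have : Nontrivial (A s) := Fintype.one_lt_card_iff_nontrivial.mp (hcard s)
  refine unanimous_and_strategyProof_iff_isFBR (fun Q hQ => ?_) (hgraph s).1 (by omega)
  obtain ⟨P, hP, rfl⟩ := hQ
  have h := (hhyb P hP).hybridPref_marg s
  rw [hs] at h
  exact h.singlePeaked

/-- On a multidimensional hybrid domain, for a component whose marginal
thresholds coincide, strategy-proof unanimous marginal rules are exactly the FBRs. -/
theorem stmt_2 {m : ℕ} (hm : 2 ≤ m) {A : Fin m → Type u}
    [∀ s, Fintype (A s)] [∀ s, Nonempty (A s)]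
    (hcard : ∀ s, 2 ≤ Fintype.card (A s))
    (D : Set (Pref (∀ s, A s)))
    (prec : ∀ s, LinearOrder (A s)) (xlo xhi : ∀ s, A s)
    (hMDH : MDHybridDomain D prec xlo xhi)
    (s : Fin m) (hs : xlo s = xhi s)
    (n : ℕ) (hn : 2 ≤ n)
    (f : (Fin n → (margDomain D s)) → A s) :
    (Unanimous (margDomain D s) f ∧ StrategyProof (margDomain D s) f) ↔
      IsFBR (prec s) (margDomain D s) f :=
  stmt_2_general hcard D prec xlo xhi hMDH s hs n hn f
end
end

section
/- Let D be a rich domain that is a decomposable domain. Then every preference of D is top-separable: for every P ∈ D with top x and all similar a,b ∈ A differing exactly in component s, if a^s = x^s then a P b. -/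
noncomputable section

universe u

/-! A componentwise dictatorship is decomposable into marginal dictatorships, so on a
decomposable domain it is strategy-proof. Let voter `0` dictate component `s` with preference
`P` and voter `1` the other components with a preference topped by `b`: the outcome is `a`, and
by reporting a preference topped by `b` voter `0` can move it to `b`. Strategy-proofness then
forces `a P b`. -/

theorem Pref.top_marg {m : ℕ} {A : Fin m → Type u} [∀ s, Fintype (A s)]
    [∀ s, Nonempty (A s)] (P : Pref (∀ s, A s)) (t : Fin m) :
    (P.marg t).top = P.top t := by
  by_contra hne
  have hmarg := (P.marg t).top_spec (P.top t) (Ne.symm hne)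
  have htop : (P.marg t).rel (P.top t) (P.marg t).top := by
    change P.rel (Function.update P.top t (P.top t)) (Function.update P.top t _)
    rw [Function.update_eq_self]
    exact P.top_spec _ fun h => hne (by simpa using congrFun h t)
  exact (P.marg t).asymm _ _ hmarg htop

section Dictatorship

variable {β : Type u} (E : Set (Pref β)) {n : ℕ} (i : Fin n)

theorem unanimous_dictatorship [Finite β] [Nonempty β] :
    Unanimous E fun q => (q i).1.top :=
  fun _ _ h => h i

theorem strategyProof_dictatorship [Finite β] [Nonempty β] :
    StrategyProof E fun q => (q i).1.top := by
  intro q j Q hne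
  by_cases hj : j = i
  · subst hj
    simp only [Function.update_self] at hne ⊢
    exact (q j).1.top_spec _ (Ne.symm hne)
  · simp only [Function.update_of_ne (Ne.symm hj), ne_eq, not_true_eq_false] at hne

end Dictatorship

section ComponentwiseDictatorship

variable {m : ℕ} {A : Fin m → Type u} [∀ s, Fintype (A s)] [∀ s, Nonempty (A s)]
  {D : Set (Pref (∀ s, A s))} {n : ℕ}

variable (D) in
def componentwiseDictatorship (d : Fin m → Fin n) (p : Fin n → D) : ∀ t, A t :=
  fun t => (p (d t)).1.top t

variable (D) in
theorem decomposable_componentwiseDictatorship (d : Fin m → Fin n) :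
    Decomposable D (componentwiseDictatorship D d) fun t q => (q (d t)).1.top :=
  fun p t => ((p (d t)).1.top_marg t).symm

theorem DecomposableDomain.strategyProof_componentwiseDictatorship
    (hdec : DecomposableDomain D) (hn : 2 ≤ n) (d : Fin m → Fin n) :
    StrategyProof D (componentwiseDictatorship D d) :=
  ((hdec n hn _).2 ⟨_, decomposable_componentwiseDictatorship D d, fun t =>
    ⟨unanimous_dictatorship _ (d t), strategyProof_dictatorship _ (d t)⟩⟩).2

theorem DecomposableDomain.topSeparable (hdec : DecomposableDomain D)
    (hrich : MinimallyRich D) : ∀ P ∈ D, TopSeparable P := by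
  classical
  intro P hP s a b hab has
  obtain ⟨P', hP', rfl⟩ := hrich b
  let d : Fin m → Fin 2 := fun t => if t = s then 0 else 1
  let p : Fin 2 → D := ![⟨P, hP⟩, ⟨P', hP'⟩]
  have hfp : componentwiseDictatorship D d p = a := by
    funext t
    by_cases ht : t = s
    · subst ht
      simp [componentwiseDictatorship, d, p, has]
    · simp [componentwiseDictatorship, d, p, ht, hab.2 t ht]
  have hfp' : componentwiseDictatorship D d (Function.update p 0 ⟨P', hP'⟩) = P'.top := by
    funext t
    by_cases ht : t = s <;> simp [componentwiseDictatorship, d, p, ht]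
  have hsp := hdec.strategyProof_componentwiseDictatorship le_rfl d p 0 ⟨P', hP'⟩
  rw [hfp, hfp'] at hsp
  exact hsp fun h => hab.1 (congrFun h s)

end ComponentwiseDictatorship

theorem stmt_7_general {m : ℕ} {A : Fin m → Type u}
    [∀ s, Fintype (A s)] [∀ s, Nonempty (A s)]
    (D : Set (Pref (∀ s, A s)))
    (hrich : RichDomain D)
    (hdec : DecomposableDomain D) :
    ∀ P ∈ D, TopSeparable P :=
  hdec.topSeparable hrich.1

/-- On a rich decomposable domain, every preference is top-separable. -/
theorem stmt_7 {m : ℕ} (hm : 2 ≤ m) {A : Fin m → Type u}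
    [∀ s, Fintype (A s)] [∀ s, Nonempty (A s)]
    (hcard : ∀ s, 2 ≤ Fintype.card (A s))
    (D : Set (Pref (∀ s, A s)))
    (hrich : RichDomain D)
    (hdec : DecomposableDomain D) :
    ∀ P ∈ D, TopSeparable P :=
  stmt_7_general D hrich hdec
end
end
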